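/- arXiv:alg-geom/9508009 — 4 statements merged into one kernel-verified Lean document; each statement's English description precedes it below -/
import Mathlib

section
/- Let A be a commutative ring of characteristic p (p prime). The map A → Ω¹_A / dA sending a to the class of a^{p-1} da modulo exact differentials is additive: the class of (a+b)^{p-1}d(a+b) equals the class of a^{p-1}da plus the class of b^{p-1}db. Explicitly, (a+b)^{p-1}d(a+b) − a^{p-1}da − b^{p-1}db = dc, where c ∈ A is obtained by evaluating at (a,b) the integer polynomial ((X+Y)^p − X^p − Y^p)/p ∈ Z[X,Y]. -/
/-!
Write `c = Q(a, b)`. Since `p • ∂Q/∂Xᵢ = ∂/∂Xᵢ ((X₀ + X₁)^p - X₀^p - X₁^p)` in the torsion-free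
ring `ℤ[X₀, X₁]`, we get `∂Q/∂Xᵢ = (X₀ + X₁)^(p-1) - Xᵢ^(p-1)`.
The chain rule `dc = ∂Q/∂X₀(a, b) da + ∂Q/∂X₁(a, b) db` then gives the identity in `Ω¹_A`.
-/

open MvPolynomial

theorem Derivation.map_aeval_eq_sum_pderiv {R A M σ : Type*} [CommSemiring R] [CommSemiring A]
    [Algebra R A] [AddCommMonoid M] [Module A M] [Module R M] [IsScalarTower R A M]
    [Fintype σ] [DecidableEq σ] (D : Derivation R A M) (v : σ → A) (P : MvPolynomial σ R) :
    D (aeval v P) = ∑ i, aeval v (pderiv i P) • D (v i) := by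
  induction P using MvPolynomial.induction_on with
  | C r => simp
  | add P Q hP hQ => simp [hP, hQ, Finset.sum_add_distrib, add_smul]
  | mul_X P i hP =>
    simp [Derivation.leibniz, hP, Finset.smul_sum, Pi.single_apply, apply_ite (aeval v), add_smul,
      Finset.sum_add_distrib, smul_smul, mul_comm (v i)]

theorem pderiv_eq_of_zsmul_eq_add_pow_sub {n : ℕ} (hn : n ≠ 0) {Q : MvPolynomial (Fin 2) ℤ}
    (hQ : (n : ℤ) • Q = (X 0 + X 1) ^ n - X 0 ^ n - X 1 ^ n) (i : Fin 2) :
    pderiv i Q = (X 0 + X 1) ^ (n - 1) - X i ^ (n - 1) := by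
  refine smul_right_injective (MvPolynomial (Fin 2) ℤ) (Int.natCast_ne_zero.mpr hn) ?_
  dsimp only
  rw [← map_zsmul, hQ]
  fin_cases i <;> simp [Derivation.leibniz_pow, ← Nat.cast_smul_eq_nsmul ℤ] <;> ring

theorem stmt_7_general (p : ℕ) [Fact p.Prime] (k A : Type*) [CommRing k] [CommRing A]
    [Algebra k A] (a b : A)
    (Q : MvPolynomial (Fin 2) ℤ)
    (hQ : (p : ℤ) • Q = (X 0 + X 1) ^ p - X 0 ^ p - X 1 ^ p) :
    (a + b) ^ (p - 1) • KaehlerDifferential.D k A (a + b)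
        - a ^ (p - 1) • KaehlerDifferential.D k A a
        - b ^ (p - 1) • KaehlerDifferential.D k A b
      = KaehlerDifferential.D k A (MvPolynomial.aeval ![a, b] Q) := by
  have hpderiv := pderiv_eq_of_zsmul_eq_add_pow_sub (Fact.out : p.Prime).ne_zero hQ
  rw [← (KaehlerDifferential.D k A).coe_restrictScalars ℤ,
    Derivation.map_aeval_eq_sum_pderiv, Fin.sum_univ_two, hpderiv, hpderiv]
  simp only [map_sub, map_add, map_pow, aeval_X, Matrix.cons_val_zero, Matrix.cons_val_one,
    Derivation.coe_restrictScalars]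
  module

open MvPolynomial in
/-- for a commutative ring `A` of characteristic `p`, the map
`a ↦ [a^{p-1} da] ∈ Ω¹_A/dA` is additive; explicitly
`(a+b)^{p-1}d(a+b) − a^{p-1}da − b^{p-1}db = dc` where `c` is the evaluation at `(a,b)`
of the integer polynomial `((X+Y)^p − X^p − Y^p)/p ∈ ℤ[X,Y]`. -/
theorem stmt_7 (p : ℕ) [Fact p.Prime] (k A : Type*) [CommRing k] [CommRing A]
    [Algebra k A] [CharP A p] (a b : A)
    (Q : MvPolynomial (Fin 2) ℤ)
    (hQ : (p : ℤ) • Q = (X 0 + X 1) ^ p - X 0 ^ p - X 1 ^ p) :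
    (a + b) ^ (p - 1) • KaehlerDifferential.D k A (a + b)
        - a ^ (p - 1) • KaehlerDifferential.D k A a
        - b ^ (p - 1) • KaehlerDifferential.D k A b
      = KaehlerDifferential.D k A (MvPolynomial.aeval ![a, b] Q) :=
  stmt_7_general p k A a b Q hQ
end

section
/- Let p be a prime, W = W₂(k) the length-2 Witt vectors over a perfect field k of characteristic p, and M a commutative additive monoid. Let F⁽²⁾ : W[M] → W[M] be the ring homomorphism extending the Witt-vector Frobenius on W and sending each monomial x^m to x^{pm}. Then the reduction of F⁽²⁾ modulo p, under the canonical isomorphism W[M]/pW[M] ≅ k[M], is the Frobenius endomorphism of k[M]. -/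
/-- let `W = W₂(k)` with its Witt-vector Frobenius `Wf` (coefficientwise
`p`-th power), `πW : W → k` the reduction mod `p` (first coefficient), and let
`F⁽²⁾ : W[M] → W[M]` be the ring homomorphism extending `Wf` and sending each monomial
`x^m` to `x^{pm}`.  Then the reduction of `F⁽²⁾` modulo `p`, under the canonical
identification `W[M]/pW[M] ≅ k[M]` (given by the reduction map `red`), is the
Frobenius endomorphism `f ↦ f^p` of `k[M]`. -/
theorem stmt_10 (p : ℕ) [Fact p.Prime] (k : Type*) [Field k] [CharP k p] [PerfectRing k p]
    (M : Type*) [AddCommMonoid M]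
    (Wf : TruncatedWittVector p 2 k →+* TruncatedWittVector p 2 k)
    (hWf : ∀ (w : TruncatedWittVector p 2 k) (i : Fin 2), (Wf w).coeff i = w.coeff i ^ p)
    (πW : TruncatedWittVector p 2 k →+* k)
    (hπW : ∀ w : TruncatedWittVector p 2 k, πW w = w.coeff 0)
    (F2 : AddMonoidAlgebra (TruncatedWittVector p 2 k) M →+*
      AddMonoidAlgebra (TruncatedWittVector p 2 k) M)
    (hF2 : ∀ (m : M) (w : TruncatedWittVector p 2 k),
      F2 (AddMonoidAlgebra.single m w) = AddMonoidAlgebra.single (p • m) (Wf w))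
    (red : AddMonoidAlgebra (TruncatedWittVector p 2 k) M →+* AddMonoidAlgebra k M)
    (hred : ∀ (m : M) (w : TruncatedWittVector p 2 k),
      red (AddMonoidAlgebra.single m w) = AddMonoidAlgebra.single m (πW w)) :
    ∀ f, red (F2 f) = red f ^ p := by
  haveI : CharP (AddMonoidAlgebra k M) p :=
    charP_of_injective_ringHom (f := AddMonoidAlgebra.singleZeroRingHom)
      (AddMonoidAlgebra.single_right_injective (m := 0)) p
  intro f
  induction f using AddMonoidAlgebra.induction_linear with
  | zero => simp [zero_pow (Fact.out (p := p.Prime)).ne_zero]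
  | add f g hf hg => rw [map_add, map_add, hf, hg, ← add_pow_char, map_add]
  | single m w =>
      rw [hF2, hred, hred, AddMonoidAlgebra.single_pow, hπW, hπW, hWf]
end

section
/- Let X be a projective scheme over a field k, L an ample line bundle on X, F a coherent sheaf on X, i > 0, and p ≥ 2 an integer. Suppose that for every integer m ≥ 1 there is an injection of k-vector spaces H^i(X, F ⊗ L^m) ↪ H^i(X, F ⊗ L^{pm}). Then H^i(X, F ⊗ L) = 0. -/
/-- (abstract form, since coherent sheaf cohomology on projective schemes
is not yet in Mathlib). Here `H m` plays the role of `H^i(X, F ⊗ L^m)` for `X`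
projective over `k`, `L` ample, `F` coherent and `i > 0`:
these are finite-dimensional `k`-vector spaces, Serre's vanishing theorem gives
`H^i(X, F ⊗ L^m) = 0` for all large `m` (hypothesis `hserre`), and we assume for each
`m ≥ 1` an injection `H^i(X, F ⊗ L^m) ↪ H^i(X, F ⊗ L^{pm})`.  Conclusion:
`H^i(X, F ⊗ L) = 0`. -/
theorem stmt_12 (k : Type*) [Field k] (p : ℕ) (hp : 2 ≤ p)
    (H : ℕ → Type*) [∀ m, AddCommGroup (H m)] [∀ m, Module k (H m)]
    (hserre : ∃ N : ℕ, ∀ m : ℕ, N ≤ m → Subsingleton (H m))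
    (hinj : ∀ m : ℕ, 1 ≤ m → ∃ f : H m →ₗ[k] H (p * m), Function.Injective f) :
    Subsingleton (H 1) := by
  obtain ⟨N, hN⟩ := hserre
  have hp1 : 1 ≤ p := le_trans one_le_two hp
  have key : ∀ n : ℕ, ∃ g : H 1 →ₗ[k] H (p ^ n), Function.Injective g := by
    intro n
    induction n with
    | zero => exact ⟨LinearMap.id, fun a b h => h⟩
    | succ n ih =>
      obtain ⟨g, hg⟩ := ih
      obtain ⟨f, hf⟩ := hinj (p ^ n) (Nat.one_le_pow _ _ (lt_of_lt_of_le one_pos hp1))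
      have e : p * p ^ n = p ^ (n + 1) := (pow_succ' p n).symm
      exact e ▸ ⟨f.comp g, hf.comp hg⟩
  obtain ⟨g, hg⟩ := key N
  have : Subsingleton (H (p ^ N)) := hN _ (Nat.le_of_lt (Nat.lt_pow_self (n := N) hp))
  exact ⟨fun a b => hg (Subsingleton.elim _ _)⟩
end

section
/- Let A be a commutative ring of characteristic p admitting the following data: a flat W₂(k)-algebra A⁽²⁾ with A⁽²⁾/pA⁽²⁾ ≅ A and a ring homomorphism F⁽²⁾ : A⁽²⁾ → A⁽²⁾ lifting the Frobenius of A and covering the Witt Frobenius on W₂(k). Write F⁽²⁾(b) = b^p + p·φ(b). Then the map δ : A → Ω¹_A defined by δ(a) = ā^{p-1} dā + d(φ(b)) for any lift b ∈ A⁽²⁾ of a is well defined (independent of the choice of lift b) and is an additive map satisfying δ(a₁a₂) = a₁^p δ(a₂) + a₂^p δ(a₁). -/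
set_option linter.unusedSectionVars false

open Finset

section WittAux

variable (p : ℕ) [hp : Fact p.Prime] (k : Type*) [Field k] [CharP k p] [PerfectRing k p]

lemma aux_witt_psq : (p : TruncatedWittVector p 2 k) * (p : TruncatedWittVector p 2 k) = 0 := by
  have h : (p : TruncatedWittVector p 2 k) * (p : TruncatedWittVector p 2 k)
      = WittVector.truncate 2 ((p : WittVector p k) * (p : WittVector p k)) := by
    simp
  rw [h]
  ext i
  rcases i with ⟨(_ | _ | n), hn⟩
  · rw [WittVector.coeff_truncate]
    show ((p : WittVector p k) * (p : WittVector p k)).coeff 0 = _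
    rw [mul_comm, WittVector.mul_charP_coeff_zero]
    simp
  · rw [WittVector.coeff_truncate]
    show ((p : WittVector p k) * (p : WittVector p k)).coeff (0 + 1) = _
    rw [mul_comm, WittVector.mul_charP_coeff_succ, WittVector.coeff_p_zero,
      zero_pow hp.out.ne_zero]
    simp
  · omega

lemma aux_witt_ker (x : TruncatedWittVector p 2 k)
    (hx : (p : TruncatedWittVector p 2 k) * x = 0) :
    ∃ y : TruncatedWittVector p 2 k, x = (p : TruncatedWittVector p 2 k) * y := by
  obtain ⟨x', rfl⟩ := WittVector.truncate_surjective p 2 k x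
  have h1 : (p : TruncatedWittVector p 2 k) * WittVector.truncate 2 x'
      = WittVector.truncate 2 (x' * (p : WittVector p k)) := by
    rw [map_mul, map_natCast, mul_comm]
  have h0 : x'.coeff 0 = 0 := by
    have h2 : (x' * (p : WittVector p k)).coeff (0 + 1) = 0 := by
      have h3 := congrArg (fun z => TruncatedWittVector.coeff (⟨1, one_lt_two⟩ : Fin 2) z)
        (h1.symm.trans hx)
      simp only [WittVector.coeff_truncate, Fin.val_mk, TruncatedWittVector.coeff_zero] at h3
      exact h3
    rw [WittVector.mul_charP_coeff_succ] at h2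
    exact pow_eq_zero_iff hp.out.ne_zero |>.mp h2
  refine ⟨WittVector.truncate 2 (WittVector.mk p fun n =>
    if n = 0 then (frobeniusEquiv k p).symm (x'.coeff 1) else 0), ?_⟩
  rw [← map_natCast (WittVector.truncate (p := p) (R := k) 2) p, ← map_mul]
  ext i
  rw [WittVector.coeff_truncate, WittVector.coeff_truncate]
  rcases i with ⟨(_ | _ | n), hn⟩
  · show x'.coeff 0 = ((p : WittVector p k) * _).coeff 0
    rw [mul_comm, WittVector.mul_charP_coeff_zero, h0]
  · show x'.coeff (0 + 1) = ((p : WittVector p k) * _).coeff (0 + 1)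
    rw [mul_comm, WittVector.mul_charP_coeff_succ]
    simp [WittVector.coeff_mk, frobeniusEquiv_symm_pow_p]
  · omega

end WittAux

lemma aux_psq_A2 (p : ℕ) [hp : Fact p.Prime] (k : Type*) [Field k] [CharP k p]
    [PerfectRing k p] (A2 : Type*) [CommRing A2] [Algebra (TruncatedWittVector p 2 k) A2] :
    (p : A2) * (p : A2) = 0 := by
  have h : (p : A2) = algebraMap (TruncatedWittVector p 2 k) A2 (p : TruncatedWittVector p 2 k) := by
    simp
  rw [h, ← map_mul, aux_witt_psq, map_zero]

lemma aux_flat_ker (p : ℕ) [hp : Fact p.Prime] (k : Type*) [Field k] [CharP k p]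
    [PerfectRing k p] (A2 : Type*) [CommRing A2] [Algebra (TruncatedWittVector p 2 k) A2]
    [Module.Flat (TruncatedWittVector p 2 k) A2]
    (z : A2) (hz : (p : A2) * z = 0) : ∃ u : A2, z = (p : A2) * u := by
  set f : TruncatedWittVector p 2 k →ₗ[TruncatedWittVector p 2 k] TruncatedWittVector p 2 k :=
    LinearMap.lsmul (TruncatedWittVector p 2 k) (TruncatedWittVector p 2 k)
      (p : TruncatedWittVector p 2 k) with hf
  have hexact : Function.Exact f f := by
    intro y
    constructor
    · intro hy
      obtain ⟨w, hw⟩ := aux_witt_ker p k y (by simpa [hf, smul_eq_mul] using hy)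
      exact ⟨w, by simp [hf, smul_eq_mul, hw.symm]⟩
    · rintro ⟨w, rfl⟩
      show (p : TruncatedWittVector p 2 k) • ((p : TruncatedWittVector p 2 k) • w) = 0
      rw [smul_smul, smul_eq_mul, aux_witt_psq, zero_mul]
  have he2 := Module.Flat.lTensor_exact A2 hexact
  set e := TensorProduct.rid (TruncatedWittVector p 2 k) A2 with he
  have hcomm : ∀ w : TensorProduct (TruncatedWittVector p 2 k) A2 (TruncatedWittVector p 2 k),
      e (LinearMap.lTensor A2 f w) = (p : A2) * e w := by
    intro w
    induction w using TensorProduct.induction_on with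
    | zero => simp
    | tmul x y =>
        simp only [LinearMap.lTensor_tmul, hf, LinearMap.lsmul_apply, smul_eq_mul,
          TensorProduct.rid_tmul, he]
        rw [mul_smul, Algebra.smul_def, map_natCast]
    | add x y hx hy => simp only [map_add, hx, hy, mul_add]
  have hmem : LinearMap.lTensor A2 f (z ⊗ₜ[TruncatedWittVector p 2 k]
      (1 : TruncatedWittVector p 2 k)) = 0 := by
    simp only [LinearMap.lTensor_tmul, hf, LinearMap.lsmul_apply, smul_eq_mul, mul_one]
    rw [← show ((p : TruncatedWittVector p 2 k) • z) ⊗ₜ[TruncatedWittVector p 2 k]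
          (1 : TruncatedWittVector p 2 k)
        = z ⊗ₜ[TruncatedWittVector p 2 k] (p : TruncatedWittVector p 2 k) by
      rw [TensorProduct.smul_tmul, smul_eq_mul, mul_one]]
    rw [show (p : TruncatedWittVector p 2 k) • z = (p : A2) * z by
      rw [Algebra.smul_def, map_natCast]]
    rw [hz, TensorProduct.zero_tmul]
  obtain ⟨w, hw⟩ := (he2 _).mp hmem
  refine ⟨e w, ?_⟩
  have h3 := hcomm w
  rw [hw] at h3
  simpa [he] using h3


section SumAux

variable {p : ℕ} [hp : Fact p.Prime]

lemma aux_nat_id1 {i : ℕ} (h0 : 0 < i) (h1 : i < p) :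
    p.choose i / p * i = (p - 1).choose (i - 1) := by
  have hd : p ∣ p.choose i := Nat.Prime.dvd_choose_self hp.out (by omega) h1
  apply Nat.eq_of_mul_eq_mul_left hp.out.pos
  rw [← mul_assoc, Nat.mul_div_cancel' hd]
  have h2 := Nat.add_one_mul_choose_eq (p - 1) (i - 1)
  rw [show p - 1 + 1 = p by omega,
    show i - 1 + 1 = i by omega] at h2
  linarith

lemma aux_nat_id2 {i : ℕ} (h0 : 0 < i) (h1 : i < p) :
    p.choose i / p * (p - i) = (p - 1).choose i := by
  have hd : p ∣ p.choose i := Nat.Prime.dvd_choose_self hp.out (by omega) h1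
  apply Nat.eq_of_mul_eq_mul_left hp.out.pos
  rw [← mul_assoc, Nat.mul_div_cancel' hd]
  have h2 := Nat.choose_mul_succ_eq (p - 1) i
  rw [show p - 1 + 1 = p by omega] at h2
  linarith

variable {A : Type*} [CommRing A]

lemma aux_sum_id1 (x y : A) :
    ∑ i ∈ Ioo 0 p, ((p.choose i / p * i : ℕ) : A) * (x ^ (i - 1) * y ^ (p - i))
      = (x + y) ^ (p - 1) - x ^ (p - 1) := by
  have h1 : ∀ i ∈ Ioo 0 p, ((p.choose i / p * i : ℕ) : A) * (x ^ (i - 1) * y ^ (p - i))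
      = x ^ (i - 1) * y ^ ((p - 1) - (i - 1)) * (((p - 1).choose (i - 1) : ℕ) : A) := by
    intro i hi
    rw [mem_Ioo] at hi
    rw [aux_nat_id1 hi.1 hi.2, show p - 1 - (i - 1) = p - i by omega]
    ring
  rw [Finset.sum_congr rfl h1]
  rw [show Ioo 0 p = Ico 1 p from rfl, Finset.sum_Ico_eq_sum_range]
  have h3 : ∀ j ∈ range (p - 1),
      x ^ (1 + j - 1) * y ^ ((p - 1) - (1 + j - 1)) * (((p - 1).choose (1 + j - 1) : ℕ) : A)
      = x ^ j * y ^ (p - 1 - j) * ((p - 1).choose j : ℕ) := by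
    intro j hj
    rw [show 1 + j - 1 = j by omega]
  rw [Finset.sum_congr rfl h3]
  have h4 := add_pow x y (p - 1)
  rw [Finset.sum_range_succ, Nat.sub_self, pow_zero, Nat.choose_self, Nat.cast_one,
    mul_one, mul_one] at h4
  rw [h4]
  ring

lemma aux_sum_id2 (x y : A) :
    ∑ i ∈ Ioo 0 p, ((p.choose i / p * (p - i) : ℕ) : A) * (x ^ i * y ^ (p - i - 1))
      = (x + y) ^ (p - 1) - y ^ (p - 1) := by
  have h1 : ∀ i ∈ Ioo 0 p, ((p.choose i / p * (p - i) : ℕ) : A) * (x ^ i * y ^ (p - i - 1))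
      = x ^ i * y ^ ((p - 1) - i) * (((p - 1).choose i : ℕ) : A) := by
    intro i hi
    rw [mem_Ioo] at hi
    rw [aux_nat_id2 hi.1 hi.2, show p - i - 1 = p - 1 - i by omega]
    ring
  rw [Finset.sum_congr rfl h1]
  rw [show Ioo 0 p = Ico 1 p from rfl, Finset.sum_Ico_eq_sum_range]
  have h4 := add_pow x y (p - 1)
  rw [Finset.sum_range_succ', pow_zero, Nat.choose_zero_right, Nat.cast_one, one_mul,
    Nat.sub_zero, mul_one] at h4
  -- h4 : (x+y)^(p-1) = ∑ i in range (p-1), x^(i+1) * y^(p-1-(i+1)) * choose (p-1) (i+1) + y^(p-1)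
  have h5 : ∀ j ∈ range (p - 1),
      x ^ (1 + j) * y ^ ((p - 1) - (1 + j)) * (((p - 1).choose (1 + j) : ℕ) : A)
      = x ^ (j + 1) * y ^ (p - 1 - (j + 1)) * ((p - 1).choose (j + 1) : ℕ) := by
    intro j hj
    rw [show 1 + j = j + 1 by omega]
  rw [Finset.sum_congr rfl h5, h4]
  ring

end SumAux

section DAux

variable {p : ℕ} [hp : Fact p.Prime]
variable {R A M : Type*} [CommRing R] [CommRing A] [Algebra R A]
  [AddCommGroup M] [Module A M] [Module R M] [IsScalarTower R A M]

lemma aux_Dsum (D : Derivation R A M) (x y : A) :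
    D (∑ i ∈ Ioo 0 p, x ^ i * y ^ (p - i) * ((p.choose i / p : ℕ) : A))
      = ((x + y) ^ (p - 1) - x ^ (p - 1)) • D x
        + ((x + y) ^ (p - 1) - y ^ (p - 1)) • D y := by
  have hterm : ∀ i ∈ Ioo 0 p, D (x ^ i * y ^ (p - i) * ((p.choose i / p : ℕ) : A))
      = (((p.choose i / p * i : ℕ) : A) * (x ^ (i - 1) * y ^ (p - i))) • D x
        + (((p.choose i / p * (p - i) : ℕ) : A) * (x ^ i * y ^ (p - i - 1))) • D y := by
    intro i hi
    rw [Derivation.leibniz, Derivation.map_natCast, smul_zero, zero_add,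
      Derivation.leibniz, Derivation.leibniz_pow, Derivation.leibniz_pow,
      ← Nat.cast_smul_eq_nsmul A i, ← Nat.cast_smul_eq_nsmul A (p - i)]
    push_cast
    match_scalars <;> ring
  rw [map_sum, Finset.sum_congr rfl hterm, Finset.sum_add_distrib,
    ← Finset.sum_smul, ← Finset.sum_smul, aux_sum_id1, aux_sum_id2]

end DAux


/-- let `A⁽²⁾` be a flat `W₂(k)`-algebra with `A = A⁽²⁾/pA⁽²⁾`
(presented by the surjection `mk` with kernel `(p)`), and let `F⁽²⁾ : A⁽²⁾ → A⁽²⁾` be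
a lift of Frobenius, `F⁽²⁾(b) = b^p + p·φ(b)` with `φ : A⁽²⁾ → A`.  Then the recipe
`δ(a) = ā^{p-1} dā + d(φ(b))` (for `b` any lift of `a`) gives a well-defined map
`δ : A → Ω¹_{A/k}` which is additive and satisfies
`δ(a₁a₂) = a₁^p δ(a₂) + a₂^p δ(a₁)`. -/
theorem stmt_18 (p : ℕ) [Fact p.Prime] (k : Type*) [Field k] [CharP k p] [PerfectRing k p]
    (A2 : Type*) [CommRing A2] [Algebra (TruncatedWittVector p 2 k) A2]
    [Module.Flat (TruncatedWittVector p 2 k) A2]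
    (A : Type*) [CommRing A] [Algebra k A]
    (mk : A2 →+* A) (hmk : Function.Surjective mk)
    (hker : RingHom.ker mk = Ideal.span {(p : A2)})
    (F2 : A2 →+* A2) (φ : A2 → A)
    (hφ : ∀ b c : A2, mk c = φ b → F2 b = b ^ p + p * c) :
    ∃ δ : A → Ω[A⁄k],
      (∀ b : A2, δ (mk b) =
        mk b ^ (p - 1) • KaehlerDifferential.D k A (mk b) +
          KaehlerDifferential.D k A (φ b)) ∧
      (∀ a₁ a₂ : A, δ (a₁ + a₂) = δ a₁ + δ a₂) ∧
      (∀ a₁ a₂ : A, δ (a₁ * a₂) = a₁ ^ p • δ a₂ + a₂ ^ p • δ a₁) := by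
  have hp' : p.Prime := Fact.out
  classical
  obtain ⟨l, hl⟩ : ∃ l : A → A2, ∀ a, mk (l a) = a :=
    ⟨fun a => (hmk a).choose, fun a => (hmk a).choose_spec⟩
  have hmkp : mk (p : A2) = 0 := by
    have h : (p : A2) ∈ RingHom.ker mk := by
      rw [hker]; exact Ideal.mem_span_singleton_self _
    exact h
  have hpA : (p : A) = 0 := by rw [← map_natCast mk p]; exact hmkp
  have hpsq : (p : A2) * (p : A2) = 0 := aux_psq_A2 p k A2
  have key : ∀ x y : A2, (p : A2) * x = (p : A2) * y → mk x = mk y := by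
    intro x y h
    obtain ⟨u, hu⟩ := aux_flat_ker p k A2 (x - y) (by rw [mul_sub, h, sub_self])
    have h2 : mk (x - y) = mk ((p : A2) * u) := by rw [hu]
    rw [map_sub, map_mul, hmkp, zero_mul, sub_eq_zero] at h2
    exact h2
  have hφ' : ∀ b, F2 b = b ^ p + (p : A2) * l (φ b) := fun b => hφ b (l (φ b)) (hl _)
  have hmkF2 : ∀ t, mk (F2 t) = mk t ^ p := by
    intro t
    rw [hφ' t, map_add, map_mul, map_pow, hmkp, zero_mul, add_zero]
  set D := KaehlerDifferential.D k A with hD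
  have hDpow : ∀ x : A, D (x ^ p) = 0 := by
    intro x
    rw [Derivation.leibniz_pow, ← Nat.cast_smul_eq_nsmul A p, hpA, zero_smul]
  -- well-definedness with respect to the choice of lift
  have hwd : ∀ b b' : A2, mk b = mk b' →
      mk b ^ (p - 1) • D (mk b) + D (φ b) = mk b' ^ (p - 1) • D (mk b') + D (φ b') := by
    intro b b' h
    obtain ⟨t, ht⟩ : ∃ t, b' = b + (p : A2) * t := by
      have h2 : b' - b ∈ RingHom.ker mk := by
        simp [RingHom.mem_ker, map_sub, h]
      rw [hker, Ideal.mem_span_singleton] at h2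
      obtain ⟨t, ht⟩ := h2
      exact ⟨t, by rw [← ht]; ring⟩
    have hpow : b' ^ p = b ^ p := by
      rw [ht]
      have h4 := (Commute.all b ((p : A2) * t)).add_pow_prime_eq' hp'
      have h5 : ((p : A2) * t) ^ p = 0 := by
        have hsplit : ((p : A2) * t) ^ p = ((p : A2) * t) ^ 2 * ((p : A2) * t) ^ (p - 2) := by
          rw [← pow_add]
          congr 1
          have := hp'.two_le
          omega
        rw [hsplit, pow_two]
        linear_combination (t * t * ((p : A2) * t) ^ (p - 2)) * hpsq
      have h6 : (p : A2) * ∑ j ∈ Ioo 0 p, b ^ j * ((p : A2) * t) ^ (p - j)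
          * ((p.choose j / p : ℕ) : A2) = 0 := by
        rw [Finset.mul_sum]
        apply Finset.sum_eq_zero
        intro j hj
        rw [mem_Ioo] at hj
        obtain ⟨m, hm⟩ : ∃ m, p - j = m + 1 := ⟨p - j - 1, by omega⟩
        rw [hm, pow_succ]
        linear_combination (b ^ j * ((p : A2) * t) ^ m * t * ((p.choose j / p : ℕ) : A2)) * hpsq
      rw [h4, h5, h6, add_zero, add_zero]
    have hstep : (p : A2) * l (φ b') = (p : A2) * (l (φ b) + F2 t) := by
      have e1 := hφ' b'
      have e2 := hφ' b
      rw [show F2 b' = F2 b + (p : A2) * F2 t by rw [ht, map_add, map_mul, map_natCast],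
        hpow] at e1
      linear_combination e2 - e1
    have hφb' : φ b' = φ b + mk t ^ p := by
      have h7 := key _ _ hstep
      rw [hl, map_add, hl, hmkF2] at h7
      exact h7
    rw [h, hφb', map_add, hDpow, add_zero]
  -- additivity
  have hadd : ∀ b b' : A2,
      mk (b + b') ^ (p - 1) • D (mk (b + b')) + D (φ (b + b'))
      = (mk b ^ (p - 1) • D (mk b) + D (φ b))
        + (mk b' ^ (p - 1) • D (mk b') + D (φ b')) := by
    intro b b'
    have h4 := (Commute.all b b').add_pow_prime_eq' hp'
    set r := ∑ i ∈ Ioo 0 p, b ^ i * b' ^ (p - i) * ((p.choose i / p : ℕ) : A2) with hr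
    have hφadd : φ (b + b') = φ b + φ b' - mk r := by
      have hstep : (p : A2) * l (φ (b + b')) = (p : A2) * (l (φ b) + l (φ b') - r) := by
        have e0 := hφ' (b + b')
        have e1 := hφ' b
        have e2 := hφ' b'
        rw [map_add] at e0
        linear_combination e1 + e2 - e0 - h4
      have h7 := key _ _ hstep
      rw [hl, map_sub, map_add, hl, hl] at h7
      exact h7
    have hmkr : mk r = ∑ i ∈ Ioo 0 p, mk b ^ i * mk b' ^ (p - i)
        * ((p.choose i / p : ℕ) : A) := by
      rw [hr, map_sum]
      refine Finset.sum_congr rfl fun i hi => ?_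
      rw [map_mul, map_mul, map_pow, map_pow, map_natCast]
    have hDr := aux_Dsum (p := p) D (mk b) (mk b')
    rw [hφadd, map_sub, hmkr, hDr]
    simp only [map_add]
    module
  -- multiplicativity
  have hmul : ∀ b b' : A2,
      mk (b * b') ^ (p - 1) • D (mk (b * b')) + D (φ (b * b'))
      = mk b ^ p • (mk b' ^ (p - 1) • D (mk b') + D (φ b'))
        + mk b' ^ p • (mk b ^ (p - 1) • D (mk b) + D (φ b)) := by
    intro b b'
    have hstep : (p : A2) * l (φ (b * b'))
        = (p : A2) * (l (φ b) * b' ^ p + b ^ p * l (φ b')) := by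
      have e0 := hφ' (b * b')
      rw [map_mul] at e0
      have hx : (b * b') ^ p + (p : A2) * l (φ (b * b'))
          = (b ^ p + (p : A2) * l (φ b)) * (b' ^ p + (p : A2) * l (φ b')) := by
        rw [← hφ' b, ← hφ' b']
        exact e0.symm
      linear_combination hx + (l (φ b) * l (φ b')) * hpsq
    have hφmul : φ (b * b') = φ b * mk b' ^ p + mk b ^ p * φ b' := by
      have h7 := key _ _ hstep
      rw [hl, map_add, map_mul, map_mul, map_pow, map_pow, hl, hl] at h7
      exact h7
    have hxa : mk b ^ p = mk b ^ (p - 1) * mk b := by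
      rw [← pow_succ, Nat.sub_add_cancel hp'.pos]
    have hxa' : mk b' ^ p = mk b' ^ (p - 1) * mk b' := by
      rw [← pow_succ, Nat.sub_add_cancel hp'.pos]
    have key1 : (mk b * mk b') ^ (p - 1) • (mk b • D (mk b') + mk b' • D (mk b))
        = mk b ^ p • mk b' ^ (p - 1) • D (mk b') + mk b' ^ p • mk b ^ (p - 1) • D (mk b) := by
      rw [smul_add, smul_smul, smul_smul, smul_smul, smul_smul]
      congr 1
      · congr 1
        rw [hxa]; ring
      · congr 1
        rw [hxa']; ring
    rw [map_mul, hφmul, map_add, Derivation.leibniz D (mk b) (mk b'),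
      Derivation.leibniz D (φ b) (mk b' ^ p), Derivation.leibniz D (mk b ^ p) (φ b'),
      hDpow, hDpow, smul_zero, smul_zero, key1]
    simp only [smul_add]
    module
  refine ⟨fun a => mk (l a) ^ (p - 1) • D (mk (l a)) + D (φ (l a)), ?_, ?_, ?_⟩
  · intro b
    exact hwd (l (mk b)) b (hl _)
  · intro a₁ a₂
    have h1 := hwd (l (a₁ + a₂)) (l a₁ + l a₂) (by rw [hl, map_add, hl, hl])
    beta_reduce
    rw [h1, hadd]
  · intro a₁ a₂
    have h1 := hwd (l (a₁ * a₂)) (l a₁ * l a₂) (by rw [hl, map_mul, hl, hl])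
    beta_reduce
    rw [h1, hmul, hl, hl]
end
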